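/- The rational function g(x) = (x³ + 2px²)/(p³ + p²x), where p = 1 + x + x²/4, attains its global maximum over x ≥ 0 at x = 2, with maximum value 5/12. -/

import Mathlib

/-! Since `p = (x + 2)² / 4`, the function simplifies to
`g x = 32 x² (x² + 6x + 4) / ((x + 2)⁴ (x² + 8x + 4))`, and clearing denominators,
`5/12 - g x` becomes `(x - 2)²` times a polynomial with positive coefficients. -/

noncomputable def g (x : ℝ) : ℝ :=
  let p : ℝ := 1 + x + x ^ 2 / 4
  (x ^ 3 + 2 * p * x ^ 2) / (p ^ 3 + p ^ 2 * x)

lemma g_eq (x : ℝ) :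
    g x = 32 * (x ^ 2 * (x ^ 2 + 6 * x + 4)) / ((x + 2) ^ 4 * (x ^ 2 + 8 * x + 4)) := by
  have hnum : x ^ 3 + 2 * (1 + x + x ^ 2 / 4) * x ^ 2 =
      32 * (x ^ 2 * (x ^ 2 + 6 * x + 4)) / 64 := by ring
  have hden : (1 + x + x ^ 2 / 4) ^ 3 + (1 + x + x ^ 2 / 4) ^ 2 * x =
      (x + 2) ^ 4 * (x ^ 2 + 8 * x + 4) / 64 := by ring
  rw [g, hnum, hden, div_div_div_cancel_right₀ (by norm_num)]

lemma five_mul_sub_eq_sq_mul (x : ℝ) :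
    5 * ((x + 2) ^ 4 * (x ^ 2 + 8 * x + 4)) - 384 * (x ^ 2 * (x ^ 2 + 6 * x + 4)) =
      (x - 2) ^ 2 * (5 * x ^ 4 + 100 * x ^ 3 + 456 * x ^ 2 + 400 * x + 80) := by
  ring

lemma g_le_of_nonneg {x : ℝ} (hx : 0 ≤ x) : g x ≤ 5 / 12 := by
  rw [g_eq, div_le_iff₀ (by positivity)]
  have hq : 0 ≤ (x - 2) ^ 2 * (5 * x ^ 4 + 100 * x ^ 3 + 456 * x ^ 2 + 400 * x + 80) := by
    positivity
  linarith [five_mul_sub_eq_sq_mul x]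

lemma g_two : g 2 = 5 / 12 := by
  norm_num [g]

theorem stmt9 : (∀ x : ℝ, 0 ≤ x → g x ≤ 5 / 12) ∧ g 2 = 5 / 12 :=
  ⟨fun _ hx => g_le_of_nonneg hx, g_two⟩
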